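/- In a normal sequential effect algebra, the floor ⌊a⌋ := ⋀ₙ aⁿ of any element a is an idempotent, satisfies ⌊a⌋ ≤ a, and is the largest idempotent below a. -/
import Mathlib


universe u

/-- `EAle orth add a b` : the effect-algebra order `a ≤ b` iff `∃ c, a ⊕ c = b`. -/
def EAle {α : Type u} (orth : α → α → Prop) (add : α → α → α) (a b : α) : Prop :=
  ∃ c, orth a c ∧ add a c = b

/-- An effect algebra: partial sum `add` (defined when `orth` holds), zero, complement. -/
structure EffectAlgebra (α : Type u) where
  orth : α → α → Prop
  add : α → α → α
  zero : α
  compl : α → α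
  orth_comm : ∀ a b, orth a b → orth b a
  add_comm' : ∀ a b, orth a b → add a b = add b a
  orth_zero : ∀ a, orth a zero
  add_zero' : ∀ a, add a zero = a
  orth_assoc₁ : ∀ a b c, orth a b → orth (add a b) c → orth b c
  orth_assoc₂ : ∀ a b c, orth a b → orth (add a b) c → orth a (add b c)
  add_assoc' : ∀ a b c, orth a b → orth (add a b) c → add (add a b) c = add a (add b c)
  orth_compl : ∀ a, orth a (compl a)
  add_compl : ∀ a, add a (compl a) = compl zero
  compl_unique : ∀ a b, orth a b → add a b = compl zero → b = compl a
  orth_one : ∀ a, orth a (compl zero) → a = zero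

namespace EffectAlgebra
variable {α : Type u}
/-- The effect-algebra order. -/
def le (E : EffectAlgebra α) : α → α → Prop := EAle E.orth E.add
/-- The unit `1 := 0⊥`. -/
def one (E : EffectAlgebra α) : α := E.compl E.zero
end EffectAlgebra

/-- A sequential effect algebra: an effect algebra with a total product `seq`
satisfying S1–S5. -/
structure SEA (α : Type u) extends EffectAlgebra α where
  seq : α → α → α
  seq_orth : ∀ a b c, orth b c → orth (seq a b) (seq a c)                                -- S1
  seq_add : ∀ a b c, orth b c → seq a (add b c) = add (seq a b) (seq a c)                -- S1
  one_seq : ∀ a, seq (compl zero) a = a                                                  -- S2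
  seq_zero_symm : ∀ a b, seq a b = zero → seq b a = zero                                 -- S3
  comm_compl : ∀ a b, seq a b = seq b a → seq a (compl b) = seq (compl b) a              -- S4
  comm_assoc : ∀ a b c, seq a b = seq b a → seq a (seq b c) = seq (seq a b) c            -- S4
  comm_seq : ∀ a b c, seq c a = seq a c → seq c b = seq b c →
    seq c (seq a b) = seq (seq a b) c                                                    -- S5
  comm_add : ∀ a b c, seq c a = seq a c → seq c b = seq b c → orth a b →
    seq c (add a b) = seq (add a b) c                                                    -- S5

/-- A normal sequential effect algebra: a directed-complete SEA satisfying S6. -/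
structure NormalSEA (α : Type u) extends SEA α where
  dSup : Set α → α
  dSup_upper : ∀ S : Set α, S.Nonempty → DirectedOn (EAle orth add) S →
    ∀ s ∈ S, EAle orth add s (dSup S)
  dSup_least : ∀ S : Set α, S.Nonempty → DirectedOn (EAle orth add) S →
    ∀ b, (∀ s ∈ S, EAle orth add s b) → EAle orth add (dSup S) b
  seq_dSup : ∀ (a : α) (S : Set α), S.Nonempty → DirectedOn (EAle orth add) S →
    seq a (dSup S) = dSup ((fun s => seq a s) '' S)                                      -- S6
  comm_dSup : ∀ (a : α) (S : Set α), S.Nonempty → DirectedOn (EAle orth add) S →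
    (∀ s ∈ S, seq a s = seq s a) → seq a (dSup S) = seq (dSup S) a                       -- S6

/-- The `n`-fold sequential power of `a` (with `a⁰ = 1`). -/
def SEA.pow {α : Type u} (E : SEA α) (a : α) : ℕ → α
  | 0 => E.one
  | n + 1 => E.seq a (E.pow a n)

/-- The floor `⌊a⌋ := ⋀ₙ aⁿ`, realised as the complement of the supremum of the
(directed) set of complements of the powers of `a`. -/
def NormalSEA.floor {α : Type u} (E : NormalSEA α) (a : α) : α :=
  E.compl (E.dSup (Set.range fun n => E.compl (E.toSEA.pow a (n + 1))))

namespace NormalSEA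

variable {α : Type u} (E : NormalSEA α)

/-! ### Effect algebra basics -/

lemma orth_zero' (a : α) : E.orth E.zero a := E.orth_comm _ _ (E.orth_zero a)

lemma zero_add (a : α) : E.add E.zero a = a := by
  rw [E.add_comm' _ _ (E.orth_zero' a), E.add_zero']

lemma compl_compl (a : α) : E.compl (E.compl a) = a :=
  (E.compl_unique (E.compl a) a (E.orth_comm _ _ (E.orth_compl a))
    (by rw [E.add_comm' _ _ (E.orth_comm _ _ (E.orth_compl a))]; exact E.add_compl a)).symm

lemma le_refl (a : α) : E.le a a := ⟨E.zero, E.orth_zero a, E.add_zero' a⟩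

lemma orth_of_orth_add {a b c : α} (h1 : E.orth a b) (h2 : E.orth (E.add a b) c) :
    E.orth a c := by
  have hbc : E.orth b c := E.orth_assoc₁ a b c h1 h2
  have h3 : E.orth a (E.add b c) := E.orth_assoc₂ a b c h1 h2
  exact E.orth_comm _ _ (E.orth_assoc₁ b c a hbc (E.orth_comm _ _ h3))

lemma add_left_cancel {a b c : α} (hab : E.orth a b) (hac : E.orth a c)
    (h : E.add a b = E.add a c) : b = c := by
  have key : ∀ y : α, E.orth a y → E.add a y = E.add a b →
      y = E.compl (E.add (E.compl (E.add a b)) a) := by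
    intro y hay hsum
    have hx : E.orth (E.add a y) (E.compl (E.add a b)) := by
      rw [hsum]; exact E.orth_compl _
    have h1 : E.orth y (E.compl (E.add a b)) := E.orth_assoc₁ a y _ hay hx
    have h2 : E.orth a (E.add y (E.compl (E.add a b))) := E.orth_assoc₂ a y _ hay hx
    have h3 : E.add a (E.add y (E.compl (E.add a b))) = E.compl E.zero := by
      rw [← E.add_assoc' a y _ hay hx, hsum]; exact E.add_compl _
    have h4 : E.add y (E.compl (E.add a b)) = E.compl a := E.compl_unique a _ h2 h3
    have h5 : E.orth (E.add y (E.compl (E.add a b))) a := by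
      rw [h4]; exact E.orth_comm _ _ (E.orth_compl a)
    have h6 : E.orth y (E.add (E.compl (E.add a b)) a) := E.orth_assoc₂ y _ a h1 h5
    have h7 : E.add y (E.add (E.compl (E.add a b)) a) = E.compl E.zero := by
      rw [← E.add_assoc' y _ a h1 h5, h4,
        E.add_comm' _ a (E.orth_comm _ _ (E.orth_compl a))]
      exact E.add_compl a
    exact E.compl_unique _ y (E.orth_comm _ _ h6)
      (by rw [← E.add_comm' y _ h6]; exact h7)
  rw [key b hab rfl, key c hac h.symm]

lemma eq_zero_of_add_eq_zero {a b : α} (h : E.orth a b) (h2 : E.add a b = E.zero) :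
    a = E.zero := by
  have o1 : E.orth (E.add a b) (E.compl E.zero) := by rw [h2]; exact E.orth_compl _
  have hb : b = E.zero := E.orth_one b (E.orth_assoc₁ a b _ h o1)
  rw [hb, E.add_zero'] at h2; exact h2

lemma eq_zero_of_le_zero {a : α} (h : E.le a E.zero) : a = E.zero := by
  obtain ⟨c, hc, hs⟩ := h; exact E.eq_zero_of_add_eq_zero hc hs

lemma le_trans {a b c : α} (h1 : E.le a b) (h2 : E.le b c) : E.le a c := by
  obtain ⟨d, hd, rfl⟩ := h1; obtain ⟨e, he, rfl⟩ := h2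
  exact ⟨E.add d e, E.orth_assoc₂ a d e hd he, (E.add_assoc' a d e hd he).symm⟩

lemma le_antisymm {a b : α} (h1 : E.le a b) (h2 : E.le b a) : a = b := by
  obtain ⟨c, hc, rfl⟩ := h1
  obtain ⟨d, hd, hs⟩ := h2
  have h3 : E.add a (E.add c d) = E.add a E.zero := by
    rw [← E.add_assoc' a c d hc hd, hs, E.add_zero']
  have hcd : E.orth c d := E.orth_assoc₁ a c d hc hd
  have h4 : E.add c d = E.zero :=
    E.add_left_cancel (E.orth_assoc₂ a c d hc hd) (E.orth_zero a) h3
  have hc0 : c = E.zero := E.eq_zero_of_add_eq_zero hcd h4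
  rw [hc0, E.add_zero']

lemma le_compl_of_orth {a b : α} (h : E.orth a b) : E.le a (E.compl b) := by
  have hba := E.orth_comm _ _ h
  have hx := E.orth_compl (E.add b a)
  have h1 : E.orth a (E.compl (E.add b a)) := E.orth_assoc₁ b a _ hba hx
  have h2 : E.orth b (E.add a (E.compl (E.add b a))) := E.orth_assoc₂ b a _ hba hx
  have h3 : E.add b (E.add a (E.compl (E.add b a))) = E.compl E.zero := by
    rw [← E.add_assoc' b a _ hba hx]; exact E.add_compl _
  exact ⟨_, h1, E.compl_unique b _ h2 h3⟩

lemma orth_of_le_compl {a b : α} (h : E.le a (E.compl b)) : E.orth a b := by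
  obtain ⟨c, hac, hs⟩ := h
  have hca := E.orth_comm _ _ hac
  have h1 : E.orth (E.add c a) b := by
    rw [← E.add_comm' a c hac, hs]; exact E.orth_comm _ _ (E.orth_compl b)
  exact E.orth_assoc₁ c a b hca h1

lemma compl_le_compl {a b : α} (h : E.le a b) : E.le (E.compl b) (E.compl a) := by
  obtain ⟨c, hac, rfl⟩ := h
  have hx := E.orth_compl (E.add a c)
  have h1 : E.orth c (E.compl (E.add a c)) := E.orth_assoc₁ a c _ hac hx
  have h2 : E.orth a (E.add c (E.compl (E.add a c))) := E.orth_assoc₂ a c _ hac hx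
  have h3 : E.add a (E.add c (E.compl (E.add a c))) = E.compl E.zero := by
    rw [← E.add_assoc' a c _ hac hx]; exact E.add_compl _
  have h4 : E.add c (E.compl (E.add a c)) = E.compl a := E.compl_unique a _ h2 h3
  exact ⟨c, E.orth_comm _ _ h1, by
    rw [E.add_comm' _ c (E.orth_comm _ _ h1)]; exact h4⟩

lemma le_one (a : α) : E.le a (E.compl E.zero) := ⟨_, E.orth_compl a, E.add_compl a⟩

lemma zero_le (a : α) : E.le E.zero a := ⟨a, E.orth_zero' a, E.zero_add a⟩

lemma le_add_left {a b : α} (h : E.orth a b) : E.le b (E.add a b) :=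
  ⟨a, E.orth_comm _ _ h, (E.add_comm' a b h).symm⟩

lemma orth_shift {a b d : α} (h1 : E.orth b d) (h2 : E.orth a (E.add b d)) :
    E.orth (E.add a b) d ∧ E.add (E.add a b) d = E.add a (E.add b d) := by
  have hdb := E.orth_comm _ _ h1
  have h2'' : E.orth (E.add d b) a := by
    rw [← E.add_comm' b d h1]; exact E.orth_comm _ _ h2
  have hd_ba : E.orth d (E.add b a) := E.orth_assoc₂ d b a hdb h2''
  have hba : E.orth b a := E.orth_assoc₁ d b a hdb h2''
  have hab := E.orth_comm _ _ hba
  have hgoal : E.orth (E.add a b) d := by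
    rw [E.add_comm' a b hab]; exact E.orth_comm _ _ hd_ba
  exact ⟨hgoal, E.add_assoc' a b d hab hgoal⟩

lemma add_mono_right {a b c : α} (hac : E.orth a c) (hbc : E.le b c) :
    E.le (E.add a b) (E.add a c) := by
  obtain ⟨d, hbd, rfl⟩ := hbc
  obtain ⟨ho, he⟩ := E.orth_shift hbd hac
  exact ⟨d, ho, he⟩

lemma le_cancel_left {c d e : α} (hcd : E.orth c d) (hce : E.orth c e)
    (h : E.le (E.add c d) (E.add c e)) : E.le d e := by
  obtain ⟨f, hf, hsum⟩ := h
  have hdf : E.orth d f := E.orth_assoc₁ c d f hcd hf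
  have hc_df : E.orth c (E.add d f) := E.orth_assoc₂ c d f hcd hf
  have : E.add d f = e := E.add_left_cancel hc_df hce
    (by rw [← E.add_assoc' c d f hcd hf]; exact hsum)
  exact ⟨f, hdf, this⟩

/-! ### SEA basics -/

lemma seq_zero (a : α) : E.seq a E.zero = E.zero := by
  have h0 : E.orth (E.compl E.zero) E.zero := E.orth_zero _
  have h := E.seq_add a _ _ h0
  rw [E.add_zero'] at h
  exact E.add_left_cancel (E.seq_orth a _ _ h0)
    (E.orth_zero (E.seq a (E.compl E.zero))) (by rw [← h, E.add_zero'])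

lemma zero_seq (a : α) : E.seq E.zero a = E.zero := E.seq_zero_symm a E.zero (E.seq_zero a)

lemma seq_one (a : α) : E.seq a (E.compl E.zero) = a := by
  have h : E.seq a E.zero = E.seq E.zero a := by rw [E.seq_zero, E.zero_seq]
  rw [E.comm_compl a E.zero h, E.one_seq]

lemma seq_add_compl (a b : α) :
    E.add (E.seq a b) (E.seq a (E.compl b)) = a := by
  rw [← E.seq_add a b _ (E.orth_compl b), E.add_compl, E.seq_one]

lemma seq_orth_compl (a b : α) : E.orth (E.seq a b) (E.seq a (E.compl b)) :=
  E.seq_orth a _ _ (E.orth_compl b)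

lemma seq_le_self (a b : α) : E.le (E.seq a b) a :=
  ⟨_, E.seq_orth_compl a b, E.seq_add_compl a b⟩

lemma seq_mono (a : α) {b c : α} (h : E.le b c) : E.le (E.seq a b) (E.seq a c) := by
  obtain ⟨d, hbd, rfl⟩ := h
  exact ⟨E.seq a d, E.seq_orth a b d hbd, (E.seq_add a b d hbd).symm⟩

lemma seq_eq_zero_of_le (a : α) {b c : α} (h : E.le b c) (hz : E.seq a c = E.zero) :
    E.seq a b = E.zero :=
  E.eq_zero_of_le_zero (hz ▸ E.seq_mono a h)

/-! ### Powers -/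

lemma pow_zero (a : α) : E.toSEA.pow a 0 = E.compl E.zero := rfl

lemma pow_succ (a : α) (n : ℕ) : E.toSEA.pow a (n + 1) = E.seq a (E.toSEA.pow a n) := rfl

lemma pow_one (a : α) : E.toSEA.pow a 1 = a := by
  rw [E.pow_succ, E.pow_zero, E.seq_one]

lemma comm_pow (a : α) (n : ℕ) :
    E.seq a (E.toSEA.pow a n) = E.seq (E.toSEA.pow a n) a := by
  induction n with
  | zero => rw [E.pow_zero, E.seq_one, E.one_seq]
  | succ n ih =>
    rw [E.pow_succ]
    exact E.comm_seq a (E.toSEA.pow a n) a rfl ih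

lemma pow_succ_le (a : α) (n : ℕ) : E.le (E.toSEA.pow a (n + 1)) (E.toSEA.pow a n) := by
  induction n with
  | zero => rw [E.pow_one, E.pow_zero]; exact E.le_one a
  | succ n ih =>
    rw [E.pow_succ a (n + 1), E.pow_succ a n]
    exact E.seq_mono a ih

lemma pow_le_pow_add (a : α) (n k : ℕ) : E.le (E.toSEA.pow a (n + k)) (E.toSEA.pow a n) := by
  induction k with
  | zero => exact E.le_refl _
  | succ k ih => exact E.le_trans (E.pow_succ_le a (n + k)) ih

lemma pow_le_pow (a : α) {n m : ℕ} (h : n ≤ m) :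
    E.le (E.toSEA.pow a m) (E.toSEA.pow a n) := by
  obtain ⟨k, rfl⟩ := Nat.exists_eq_add_of_le h
  exact E.pow_le_pow_add a n k

end NormalSEA

/-- The directed set of complements of positive powers of `a`. -/
def NormalSEA.Sa {α : Type u} (E : NormalSEA α) (a : α) : Set α :=
  Set.range fun n => E.compl (E.toSEA.pow a (n + 1))

namespace NormalSEA

variable {α : Type u} (E : NormalSEA α)

lemma Sa_ne (a : α) : (E.Sa a).Nonempty := ⟨_, 0, rfl⟩

lemma Sa_dir (a : α) : DirectedOn (EAle E.orth E.add) (E.Sa a) := by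
  rintro x ⟨i, rfl⟩ y ⟨j, rfl⟩
  exact ⟨E.compl (E.toSEA.pow a (max i j + 1)), ⟨max i j, rfl⟩,
    E.compl_le_compl (E.pow_le_pow a (by omega)),
    E.compl_le_compl (E.pow_le_pow a (by omega))⟩

lemma floor_eq (a : α) : E.floor a = E.compl (E.dSup (E.Sa a)) := rfl

lemma floor_le_pow (a : α) (n : ℕ) : E.le (E.floor a) (E.toSEA.pow a n) := by
  cases n with
  | zero => rw [E.pow_zero]; exact E.le_one _
  | succ n =>
    have h1 := E.dSup_upper _ (E.Sa_ne a) (E.Sa_dir a) _ (⟨n, rfl⟩ :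
      E.compl (E.toSEA.pow a (n + 1)) ∈ E.Sa a)
    have h2 := E.compl_le_compl h1
    rwa [E.compl_compl] at h2

lemma le_floor {a b : α} (h : ∀ n, E.le b (E.toSEA.pow a (n + 1))) :
    E.le b (E.floor a) := by
  have hub : ∀ s ∈ E.Sa a, EAle E.orth E.add s (E.compl b) := by
    rintro s ⟨n, rfl⟩
    exact E.compl_le_compl (h n)
  have h1 := E.dSup_least _ (E.Sa_ne a) (E.Sa_dir a) _ hub
  have h2 := E.compl_le_compl h1
  rwa [E.compl_compl] at h2

lemma comm_a_floor (a : α) : E.seq a (E.floor a) = E.seq (E.floor a) a := by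
  have hS : ∀ s ∈ E.Sa a, E.seq a s = E.seq s a := by
    rintro s ⟨n, rfl⟩
    exact E.comm_compl a _ (E.comm_pow a (n + 1))
  exact E.comm_compl a _ (E.comm_dSup a _ (E.Sa_ne a) (E.Sa_dir a) hS)

lemma add_dSup_le {D : Set α} (hne : D.Nonempty) (hdir : DirectedOn (EAle E.orth E.add) D)
    {c u : α} (h : ∀ d ∈ D, E.orth d c ∧ E.le (E.add d c) u) :
    E.orth (E.dSup D) c ∧ E.le (E.add (E.dSup D) c) u := by
  have horth : E.orth (E.dSup D) c := by
    have hub : ∀ d ∈ D, EAle E.orth E.add d (E.compl c) :=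
      fun d hd => E.le_compl_of_orth (h d hd).1
    exact E.orth_of_le_compl (E.dSup_least _ hne hdir _ hub)
  obtain ⟨d0, hd0⟩ := id hne
  have hcu : E.le c u := E.le_trans (E.le_add_left (h d0 hd0).1) (h d0 hd0).2
  obtain ⟨e, hce, hceu⟩ := hcu
  have hde : ∀ d ∈ D, EAle E.orth E.add d e := by
    intro d hd
    have h1 : E.le (E.add c d) (E.add c e) := by
      rw [← E.add_comm' d c (h d hd).1, hceu]
      exact (h d hd).2
    exact E.le_cancel_left (E.orth_comm _ _ (h d hd).1) hce h1
  have hsup_e := E.dSup_least _ hne hdir _ hde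
  have hfin : E.le (E.add c (E.dSup D)) (E.add c e) := E.add_mono_right hce hsup_e
  rw [hceu] at hfin
  refine ⟨horth, ?_⟩
  rw [E.add_comm' _ c horth]
  exact hfin

lemma seq_floor_self (a : α) : E.seq a (E.floor a) = E.floor a := by
  have hle : E.le (E.seq a (E.floor a)) (E.floor a) := by
    apply E.le_floor; intro n
    have h := E.seq_mono a (E.floor_le_pow a n)
    rwa [← E.pow_succ] at h
  set s := E.dSup (E.Sa a) with hs
  have hfl : E.floor a = E.compl s := rfl
  set D := (fun x => E.seq a x) '' (E.Sa a) with hD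
  have hDne : D.Nonempty := (E.Sa_ne a).image _
  have hDdir : DirectedOn (EAle E.orth E.add) D := by
    rintro x ⟨x0, hx0, rfl⟩ y ⟨y0, hy0, rfl⟩
    obtain ⟨z, hz, hxz, hyz⟩ := E.Sa_dir a x0 hx0 y0 hy0
    exact ⟨E.seq a z, ⟨z, hz, rfl⟩, E.seq_mono a hxz, E.seq_mono a hyz⟩
  have hseqs : E.seq a s = E.dSup D := E.seq_dSup a _ (E.Sa_ne a) (E.Sa_dir a)
  have hbd : ∀ d ∈ D, E.orth d (E.compl a) ∧ E.le (E.add d (E.compl a)) s := by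
    rintro d ⟨x0, ⟨n, rfl⟩, rfl⟩
    set y := E.toSEA.pow a (n + 1) with hy
    have hyx : E.add (E.seq a y) (E.seq a (E.compl y)) = a := E.seq_add_compl a y
    have hyo : E.orth (E.seq a y) (E.seq a (E.compl y)) := E.seq_orth_compl a y
    have hx2 : E.orth (E.add (E.seq a y) (E.seq a (E.compl y))) (E.compl a) := by
      rw [hyx]; exact E.orth_compl a
    have ho1 : E.orth (E.seq a (E.compl y)) (E.compl a) := E.orth_assoc₁ _ _ _ hyo hx2
    have ho2 : E.orth (E.seq a y) (E.add (E.seq a (E.compl y)) (E.compl a)) :=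
      E.orth_assoc₂ _ _ _ hyo hx2
    have heq : E.add (E.seq a y) (E.add (E.seq a (E.compl y)) (E.compl a)) =
        E.compl E.zero := by
      rw [← E.add_assoc' _ _ _ hyo hx2, hyx]; exact E.add_compl a
    have hkey : E.add (E.seq a (E.compl y)) (E.compl a) = E.compl (E.seq a y) :=
      E.compl_unique _ _ ho2 heq
    have hyy : E.seq a y = E.toSEA.pow a (n + 2) := (E.pow_succ a (n + 1)).symm
    refine ⟨ho1, ?_⟩
    rw [hkey, hyy]
    exact E.dSup_upper _ (E.Sa_ne a) (E.Sa_dir a) _ ⟨n + 1, rfl⟩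
  obtain ⟨hto, htle⟩ := E.add_dSup_le hDne hDdir hbd
  rw [← hseqs] at hto htle
  -- regroup (seq a s ⊕ seq a s⊥) ⊕ a⊥ = 1 into seq a s⊥ ⊕ (seq a s ⊕ a⊥) = 1
  have hsum : E.add (E.seq a s) (E.seq a (E.compl s)) = a := E.seq_add_compl a s
  have horths : E.orth (E.seq a s) (E.seq a (E.compl s)) := E.seq_orth_compl a s
  have horths' := E.orth_comm _ _ horths
  have hca : E.orth (E.add (E.seq a (E.compl s)) (E.seq a s)) (E.compl a) := by
    rw [← E.add_comm' _ _ horths, hsum]; exact E.orth_compl a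
  have ho6 : E.orth (E.seq a (E.compl s)) (E.add (E.seq a s) (E.compl a)) :=
    E.orth_assoc₂ _ _ _ horths' hca
  have ho7 : E.add (E.seq a (E.compl s)) (E.add (E.seq a s) (E.compl a)) =
      E.compl E.zero := by
    rw [← E.add_assoc' _ _ _ horths' hca, ← E.add_comm' _ _ horths, hsum]
    exact E.add_compl a
  have hval : E.add (E.seq a s) (E.compl a) = E.compl (E.seq a (E.compl s)) :=
    E.compl_unique _ _ ho6 ho7
  have hyc : E.seq a (E.compl s) = E.compl (E.add (E.seq a s) (E.compl a)) := by
    rw [hval, E.compl_compl]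
  have hge : E.le (E.floor a) (E.seq a (E.floor a)) := by
    rw [hfl, hyc]
    exact E.compl_le_compl htle
  exact E.le_antisymm hge hle |>.symm

lemma pow_seq_floor (a : α) (n : ℕ) :
    E.seq (E.toSEA.pow a n) (E.floor a) = E.floor a := by
  induction n with
  | zero => rw [E.pow_zero, E.one_seq]
  | succ n ih =>
    rw [E.pow_succ, ← E.comm_assoc a (E.toSEA.pow a n) (E.floor a) (E.comm_pow a n),
      ih, E.seq_floor_self]

lemma comm_floor_pow (a : α) (n : ℕ) :
    E.seq (E.floor a) (E.toSEA.pow a n) = E.seq (E.toSEA.pow a n) (E.floor a) := by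
  induction n with
  | zero => rw [E.pow_zero, E.one_seq, E.seq_one]
  | succ n ih =>
    rw [E.pow_succ]
    exact E.comm_seq a (E.toSEA.pow a n) (E.floor a) (E.comm_a_floor a).symm ih

lemma floor_seq_compl_pow (a : α) (n : ℕ) :
    E.seq (E.floor a) (E.compl (E.toSEA.pow a (n + 1))) = E.zero := by
  have h1 := E.seq_add_compl (E.floor a) (E.toSEA.pow a (n + 1))
  have h2 : E.seq (E.floor a) (E.toSEA.pow a (n + 1)) = E.floor a := by
    rw [E.comm_floor_pow, E.pow_seq_floor]
  rw [h2] at h1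
  have ho := E.seq_orth_compl (E.floor a) (E.toSEA.pow a (n + 1))
  rw [h2] at ho
  exact E.add_left_cancel ho (E.orth_zero _) (by rw [h1, E.add_zero'])

lemma floor_seq_sup (a : α) : E.seq (E.floor a) (E.dSup (E.Sa a)) = E.zero := by
  rw [E.seq_dSup _ _ (E.Sa_ne a) (E.Sa_dir a)]
  have hDne : ((fun x => E.seq (E.floor a) x) '' (E.Sa a)).Nonempty := (E.Sa_ne a).image _
  have hDdir : DirectedOn (EAle E.orth E.add) ((fun x => E.seq (E.floor a) x) '' (E.Sa a)) := by
    rintro x ⟨x0, hx0, rfl⟩ y ⟨y0, hy0, rfl⟩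
    obtain ⟨z, hz, hxz, hyz⟩ := E.Sa_dir a x0 hx0 y0 hy0
    exact ⟨E.seq (E.floor a) z, ⟨z, hz, rfl⟩, E.seq_mono _ hxz, E.seq_mono _ hyz⟩
  refine E.le_antisymm ?_ (E.zero_le _)
  apply E.dSup_least _ hDne hDdir
  rintro x ⟨x0, ⟨n, rfl⟩, rfl⟩
  show EAle E.orth E.add (E.seq (E.floor a) (E.compl (E.toSEA.pow a (n + 1)))) E.zero
  rw [E.floor_seq_compl_pow a n]
  exact E.le_refl _

lemma floor_idem (a : α) : E.seq (E.floor a) (E.floor a) = E.floor a := by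
  have h1 := E.seq_add_compl (E.floor a) (E.dSup (E.Sa a))
  rw [E.floor_seq_sup, E.zero_add] at h1
  exact h1

lemma floor_le (a : α) : E.le (E.floor a) a := by
  have := E.floor_le_pow a 1
  rwa [E.pow_one] at this

lemma idem_seq_compl (p : α) (hp : E.seq p p = p) : E.seq p (E.compl p) = E.zero := by
  have h1 := E.seq_add_compl p p
  rw [hp] at h1
  have ho := E.seq_orth_compl p p
  rw [hp] at ho
  exact E.add_left_cancel ho (E.orth_zero p) (by rw [h1, E.add_zero'])

lemma idem_seq_of_le {p c : α} (hp : E.seq p p = p) (h : E.le p c) :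
    E.seq p c = p ∧ E.seq c p = p := by
  obtain ⟨d, hpd, rfl⟩ := h
  have hdle : E.le d (E.compl p) := E.le_compl_of_orth (E.orth_comm _ _ hpd)
  have hpd0 : E.seq p d = E.zero := E.seq_eq_zero_of_le p hdle (E.idem_seq_compl p hp)
  have hdp0 : E.seq d p = E.zero := E.seq_zero_symm p d hpd0
  have h1 : E.seq p (E.add p d) = p := by
    rw [E.seq_add p p d hpd, hp, hpd0, E.add_zero']
  have h2 : E.seq p (E.add p d) = E.seq (E.add p d) p :=
    E.comm_add p d p rfl (hpd0.trans hdp0.symm) hpd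
  exact ⟨h1, h2.symm.trans h1⟩

lemma idem_pow_seq {p a : α} (hp : E.seq p p = p) (h : E.le p a) (n : ℕ) :
    E.seq (E.toSEA.pow a n) p = p := by
  induction n with
  | zero => rw [E.pow_zero, E.one_seq]
  | succ n ih =>
    rw [E.pow_succ, ← E.comm_assoc a (E.toSEA.pow a n) p (E.comm_pow a n), ih]
    exact (E.idem_seq_of_le hp h).2

lemma idem_le_floor {p a : α} (hp : E.seq p p = p) (h : E.le p a) :
    E.le p (E.floor a) := by
  apply E.le_floor; intro n
  have h1 := E.seq_mono (E.toSEA.pow a (n + 1)) (E.le_one p)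
  rwa [E.seq_one, E.idem_pow_seq hp h] at h1

end NormalSEA

/-- In a normal SEA, `⌊a⌋` is idempotent, `⌊a⌋ ≤ a`, and `⌊a⌋` is the largest
idempotent below `a`. -/
theorem nsea_floor_largest_idem {α : Type u} (E : NormalSEA α) (a : α) :
    E.seq (E.floor a) (E.floor a) = E.floor a ∧
    E.le (E.floor a) a ∧
    ∀ p, E.seq p p = p → E.le p a → E.le p (E.floor a) := by
  exact ⟨E.floor_idem a, E.floor_le a, fun p hp hpa => E.idem_le_floor hp hpa⟩
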